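/- In the group G_n, let u = g₁^{e₁}⋯g_{2n+1}^{e_{2n+1}} and v = g₁^{f₁} g₂^{e₂}⋯g_{2n+1}^{e_{2n+1}} (agreeing in all coordinates except possibly the first). If there exists an even index l−1 with e_{l−1} odd, then u and v are conjugate; indeed w = g_l^{(f₁−e₁)(−1)^{e₂+e₄+⋯+e_{l−3}}} satisfies w u w⁻¹ = v. -/

import Mathlib

/-!
Write `t = g_l`, `u = g_{l-1}`, `c = g₁` and `R = g₂^{e₂} ⋯ g_{2n+1}^{e_{2n+1}}`, so that the
first element is `c^{e₁} R` and the second `c^{f₁} R`. The generator `t` commutes with `c` and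
with every generator except `u`, and `t u t⁻¹ = c u`. Since `u` inverts `c`, `(c u)² = u²` commutes
with `c`, so for odd `m = e_{l-1}` we get `t u^m t⁻¹ = (c u)^m = c u^m`. Pushing this `c` to the
front through `g₂^{e₂} ⋯ g_{l-2}^{e_{l-2}}` turns it into `c^ε` with
`ε = (-1)^{e₂ + e₄ + ⋯ + e_{l-3}}`, hence `t R t⁻¹ = c^ε R` and `t^K R t^{-K} = c^{εK} R`.
For `K = (f₁ - e₁) ε` this is `c^{f₁ - e₁} R`.
-/

/-- The defining relators of the group `Gₙ`: generators are indexed by `{1, …, 2n+1}`;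
for even `j`, `g_j g₁ g_j⁻¹ = g₁⁻¹` and `g_{j+1} g_j g_{j+1}⁻¹ = g₁ g_j`;
all other pairs of generators commute. -/
def relsG (n : ℕ) : Set (FreeGroup {i : ℕ // 1 ≤ i ∧ i ≤ 2*n+1}) :=
  { w | (∃ j : {i : ℕ // 1 ≤ i ∧ i ≤ 2*n+1}, j.1 % 2 = 0 ∧
          w = FreeGroup.of j * FreeGroup.of ⟨1, by omega⟩ * (FreeGroup.of j)⁻¹ *
              FreeGroup.of ⟨1, by omega⟩) ∨
        (∃ j j1 : {i : ℕ // 1 ≤ i ∧ i ≤ 2*n+1}, j.1 % 2 = 0 ∧ j1.1 = j.1 + 1 ∧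
          w = FreeGroup.of j1 * FreeGroup.of j * (FreeGroup.of j1)⁻¹ *
              (FreeGroup.of ⟨1, by omega⟩ * FreeGroup.of j)⁻¹) ∨
        (∃ a b : {i : ℕ // 1 ≤ i ∧ i ≤ 2*n+1},
          ¬ ((a.1 = 1 ∧ b.1 % 2 = 0) ∨ (b.1 = 1 ∧ a.1 % 2 = 0) ∨
             (b.1 % 2 = 0 ∧ a.1 = b.1 + 1) ∨ (a.1 % 2 = 0 ∧ b.1 = a.1 + 1)) ∧
          w = FreeGroup.of a * FreeGroup.of b * (FreeGroup.of a)⁻¹ * (FreeGroup.of b)⁻¹) }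

/-- The polycyclic group `Gₙ` of Hirsch length `2n+1`. -/
abbrev Gn (n : ℕ) := PresentedGroup (relsG n)

/-- The generator `g_i` of `Gₙ` (1-based index, `1 ≤ i ≤ 2n+1`). -/
def gg (n : ℕ) (i : ℕ) : Gn n :=
  if h : 1 ≤ i ∧ i ≤ 2*n+1 then PresentedGroup.of ⟨i, h⟩ else 1

/-- `(-1)^m` for an integer `m`: `1` if `m` is even, `-1` if `m` is odd. -/
def eps (m : ℤ) : ℤ := if m % 2 = 0 then 1 else -1

lemma eps_add (a b : ℤ) : eps (a + b) = eps a * eps b := by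
  unfold eps; split_ifs <;> omega

lemma eps_add_one (a : ℤ) : eps (a + 1) = -eps a := by
  unfold eps; split_ifs <;> omega

lemma eps_sub_one (a : ℤ) : eps (a - 1) = -eps a := by
  unfold eps; split_ifs <;> omega

lemma eps_mul_self (a : ℤ) : eps a * eps a = 1 := by
  unfold eps; split_ifs <;> rfl

namespace SemiconjBy

variable {G : Type*} [Group G]

theorem zpow_left_eps {u c : G} (h : SemiconjBy u c c⁻¹) (a : ℤ) :
    SemiconjBy (u ^ a) c (c ^ eps a) := by
  induction a using Int.induction_on with
  | zero => simp [eps]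
  | succ a ih =>
    rw [zpow_add_one, eps_add_one, zpow_neg c]
    exact ih.inv_right.mul_left h
  | pred a ih =>
    rw [zpow_sub_one, eps_sub_one, zpow_neg c]
    exact ih.inv_right.mul_left (inv_symm_left (by simpa using h.inv_right))

theorem mul_zpow_of_odd {u c : G} (h : SemiconjBy u c c⁻¹) {m : ℤ} (hm : Odd m) :
    (c * u) ^ m = c * u ^ m := by
  obtain ⟨q, rfl⟩ := hm
  have hsq : (c * u) ^ (2 : ℤ) = u ^ (2 : ℤ) := by
    rw [zpow_two, zpow_two, mul_assoc, ← mul_assoc u, h.eq]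
    group
  have hcomm : SemiconjBy (u ^ (2 * q)) c c := by
    simpa [eps] using h.zpow_left_eps (2 * q)
  rw [zpow_add_one, zpow_mul, hsq, ← zpow_mul, ← mul_assoc, hcomm.eq, mul_assoc, zpow_add_one]

theorem zpow_left_of_commute {t x c : G} (hc : Commute t c) (h : SemiconjBy t x (c * x))
    (k : ℤ) : SemiconjBy (t ^ k) x (c ^ k * x) := by
  induction k using Int.induction_on with
  | zero => simp
  | succ k ih =>
    rw [zpow_add_one, zpow_add_one, ← (Commute.self_zpow c k).eq, mul_assoc]
    exact (SemiconjBy.mul_right (hc.zpow_left k) ih).mul_left h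
  | pred k ih =>
    have hinv : SemiconjBy t⁻¹ x (c⁻¹ * x) :=
      inv_symm_left (by simpa using SemiconjBy.mul_right hc.inv_right h)
    rw [zpow_sub_one, zpow_sub_one, ← (Commute.self_zpow c _).inv_left.eq, mul_assoc]
    exact (SemiconjBy.mul_right (hc.zpow_left _).inv_right ih).mul_left hinv

end SemiconjBy

theorem List.prod_map_range_add_one_add {M : Type*} [Monoid M] (f : ℕ → M) (a b : ℕ) :
    ((List.range (a + 1 + b)).map f).prod =
      ((List.range a).map f).prod * f a * ((List.range b).map fun i => f (a + 1 + i)).prod := by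
  rw [List.range_add, List.map_append, List.prod_append, List.prod_range_succ, List.map_map]
  rfl

section Relations

variable (n : ℕ)

lemma gg_eq_of {i : ℕ} (h : 1 ≤ i ∧ i ≤ 2*n+1) : gg n i = PresentedGroup.of ⟨i, h⟩ :=
  dif_pos h

lemma commute_gg {a b : ℕ}
    (h : ¬ ((a = 1 ∧ b % 2 = 0) ∨ (b = 1 ∧ a % 2 = 0) ∨
       (b % 2 = 0 ∧ a = b + 1) ∨ (a % 2 = 0 ∧ b = a + 1))) :
    Commute (gg n a) (gg n b) := by
  by_cases ha : 1 ≤ a ∧ a ≤ 2*n+1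
  · by_cases hb : 1 ≤ b ∧ b ≤ 2*n+1
    · have hr := PresentedGroup.one_of_mem (rels := relsG n)
        (Or.inr (Or.inr ⟨⟨a, ha⟩, ⟨b, hb⟩, h, rfl⟩))
      simp only [map_mul, map_inv] at hr
      rw [gg_eq_of n ha, gg_eq_of n hb, ← commutatorElement_eq_one_iff_commute,
        commutatorElement_def]
      exact hr
    · simp [gg, hb]
  · simp [gg, ha]

lemma semiconjBy_gg_even_gg_one {j : ℕ} (hj : j % 2 = 0) (h1 : 1 ≤ j) (h2 : j ≤ 2*n+1) :
    SemiconjBy (gg n j) (gg n 1) (gg n 1)⁻¹ := by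
  have hr := PresentedGroup.one_of_mem (rels := relsG n) (Or.inl ⟨⟨j, h1, h2⟩, hj, rfl⟩)
  simp only [map_mul, map_inv] at hr
  rw [gg_eq_of n ⟨h1, h2⟩, gg_eq_of n (by omega)]
  exact mul_inv_eq_iff_eq_mul.mp (mul_eq_one_iff_eq_inv.mp hr)

lemma semiconjBy_gg_succ {j : ℕ} (hj : j % 2 = 0) (h1 : 1 ≤ j) (h2 : j + 1 ≤ 2*n+1) :
    SemiconjBy (gg n (j + 1)) (gg n j) (gg n 1 * gg n j) := by
  have hr := PresentedGroup.one_of_mem (rels := relsG n)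
    (Or.inr (Or.inl ⟨⟨j, h1, by omega⟩, ⟨j + 1, by omega, h2⟩, hj, rfl, rfl⟩))
  simp only [map_mul, map_inv] at hr
  rw [gg_eq_of n (by omega : 1 ≤ j + 1 ∧ _), gg_eq_of n (by omega : 1 ≤ j ∧ _),
    gg_eq_of n (by omega : 1 ≤ 1 ∧ _)]
  exact mul_inv_eq_iff_eq_mul.mp (mul_inv_eq_one.mp hr)

end Relations

section Products

variable (n : ℕ) (e : ℕ → ℤ)

lemma semiconjBy_prod_gg_gg_one {d : ℕ} (hd : d ≤ n) :
    SemiconjBy ((List.range (2*d)).map fun i => gg n (i+2) ^ e (i+2)).prod (gg n 1)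
      (gg n 1 ^ eps (∑ i ∈ Finset.range d, e (2*i+2))) := by
  induction d with
  | zero => simp [eps]
  | succ d ih =>
    rw [show 2 * (d + 1) = 2 * d + 1 + 1 by ring, List.prod_range_succ, List.prod_range_succ,
      Finset.sum_range_succ, eps_add, zpow_mul]
    have hodd : SemiconjBy (gg n (2*d+1+2) ^ e (2*d+1+2)) (gg n 1) (gg n 1) :=
      (commute_gg n (by omega)).zpow_left _
    have heven := (semiconjBy_gg_even_gg_one n (j := 2*d+2) (by omega) (by omega)
      (by omega)).zpow_left_eps (e (2*d+2))
    exact (((ih (by omega)).zpow_right _).mul_left heven).mul_left hodd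

lemma semiconjBy_gg_prod_gg {d : ℕ} (hd : 2*d+3 ≤ 2*n+1) (hodd : Odd (e (2*d+2))) :
    SemiconjBy (gg n (2*d+3)) ((List.range (2*n)).map fun i => gg n (i+2) ^ e (i+2)).prod
      (gg n 1 ^ eps (∑ i ∈ Finset.range d, e (2*i+2)) *
        ((List.range (2*n)).map fun i => gg n (i+2) ^ e (i+2)).prod) := by
  obtain ⟨b, hb⟩ : ∃ b, 2*n = 2*d + 1 + b := ⟨2*n - (2*d+1), by omega⟩
  have hsplit := List.prod_map_range_add_one_add (fun i => gg n (i+2) ^ e (i+2)) (2*d) b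
  rw [← hb] at hsplit
  rw [hsplit]
  have hA : Commute (gg n (2*d+3)) ((List.range (2*d)).map fun i => gg n (i+2) ^ e (i+2)).prod :=
    Commute.list_prod_right _ _ fun _ hx => by
      obtain ⟨i, hi, rfl⟩ := List.mem_map.mp hx
      exact (commute_gg n (by simp at hi; omega)).zpow_right _
  have hB : Commute (gg n (2*d+3))
      ((List.range b).map fun i => gg n (2*d+1+i+2) ^ e (2*d+1+i+2)).prod :=
    Commute.list_prod_right _ _ fun _ hx => by
      obtain ⟨i, _, rfl⟩ := List.mem_map.mp hx
      exact (commute_gg n (by omega)).zpow_right _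
  have hu : SemiconjBy (gg n (2*d+3)) (gg n (2*d+2) ^ e (2*d+2))
      (gg n 1 * gg n (2*d+2) ^ e (2*d+2)) := by
    rw [← (semiconjBy_gg_even_gg_one n (by omega) (by omega) (by omega)).mul_zpow_of_odd hodd]
    exact (semiconjBy_gg_succ n (j := 2*d+2) (by omega) (by omega) hd).zpow_right _
  have hAc := (semiconjBy_prod_gg_gg_one n e (d := d) (by omega)).eq
  have key := (SemiconjBy.mul_right hA hu).mul_right hB
  rw [← mul_assoc _ (gg n 1), hAc] at key
  simpa only [mul_assoc] using key

end Products

theorem stmt14 (n : ℕ) (e : ℕ → ℤ) (f1 : ℤ) (l : ℕ)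
    (hlo : l % 2 = 1) (hl1 : 3 ≤ l) (hl2 : l ≤ 2*n+1) (hodd : e (l-1) % 2 = 1) :
    (gg n l ^ ((f1 - e 1) * eps (∑ i ∈ Finset.range ((l-3)/2), e (2*i+2)))) *
      ((List.range (2*n+1)).map (fun i => gg n (i+1) ^ e (i+1))).prod *
      (gg n l ^ ((f1 - e 1) * eps (∑ i ∈ Finset.range ((l-3)/2), e (2*i+2))))⁻¹ =
    gg n 1 ^ f1 * ((List.range (2*n)).map (fun i => gg n (i+2) ^ e (i+2))).prod := by
  obtain ⟨d, rfl⟩ : ∃ d, l = 2*d + 3 := ⟨(l-3)/2, by omega⟩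
  rw [show (2*d+3-3)/2 = d by omega]
  rw [show 2*d+3-1 = 2*d+2 by omega] at hodd
  set S := ∑ i ∈ Finset.range d, e (2*i+2)
  set K := (f1 - e 1) * eps S
  have hR := (semiconjBy_gg_prod_gg n e hl2 (Int.odd_iff.mpr hodd)).zpow_left_of_commute
    ((commute_gg n (a := 2*d+3) (b := 1) (by omega)).zpow_right _) K
  have hc : Commute (gg n (2*d+3) ^ K) (gg n 1 ^ e 1) := (commute_gg n (by omega)).zpow_zpow _ _
  have hexp : e 1 + eps S * K = f1 := by linear_combination (f1 - e 1) * eps_mul_self S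
  rw [List.prod_range_succ', (SemiconjBy.mul_right hc hR).eq, mul_inv_cancel_right,
    ← mul_assoc, ← zpow_mul, ← zpow_add, hexp]
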